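/- (Local Yang-Baxter equation for the two-parameter R-matrix.) For real numbers x,y define R(x,y) as the 2×2 matrix with rows (x, y) and (1−x, 1−y), and for i < j in {1,2,3} let R_{ij}(x,y) be the 3×3 matrix equal to the identity except that R(x,y) is embedded at rows and columns i,j. Let x,y,z,u,v,w be real numbers, set A = uvx − ux − vy + xz, B = uwx − ux − wy + 1, and C = (AB − A(1−u)(1−w)x − Bv(x−y)) / (AB − A(1−u)(1−w) − Bvz(x−y)), and assume x ≠ 0, A ≠ 0, B ≠ 0, C ≠ 0, and AB − A(1−u)(1−w) − Bvz(x−y) ≠ 0. Define X = zC, Y = (z − A/x)C, Z = x/C, U = 1 − B, V = vz(x−y)/A, W = 1 − (1−u)(1−w)/B. Then R_{12}(x,y) R_{13}(z,u) R_{23}(v,w) = R_{23}(V,W) R_{13}(Z,U) R_{12}(X,Y). -/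

import Mathlib

open Matrix

/-!
Every `R_ij` has all column sums equal to `1`, hence so have both triple products, and it
suffices to compare their first two rows. Four of these six entries are polynomial identities in
`x, y, z, u, v, w`; the remaining two, in the middle row, become affine in `C` after clearing
denominators, and they hold because `C` is the root of that affine equation,
`C * (A * B - A * (1 - u) * (1 - w) - B * v * z * (x - y))`
  `= A * B - A * (1 - u) * (1 - w) * x - B * v * (x - y)`.
-/

/-- Embedding of the two-parameter R-matrix `R(x,y) = !![x, y; 1−x, 1−y]` into the 3×3
identity at rows/columns `1,2`. -/
def R12 (x y : ℝ) : Matrix (Fin 3) (Fin 3) ℝ :=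
  !![x, y, 0; 1 - x, 1 - y, 0; 0, 0, 1]

/-- Embedding at rows/columns `1,3`. -/
def R13 (x y : ℝ) : Matrix (Fin 3) (Fin 3) ℝ :=
  !![x, 0, y; 0, 1, 0; 1 - x, 0, 1 - y]

/-- Embedding at rows/columns `2,3`. -/
def R23 (x y : ℝ) : Matrix (Fin 3) (Fin 3) ℝ :=
  !![1, 0, 0; 0, x, y; 0, 1 - x, 1 - y]

theorem Matrix.eq_of_one_vecMul_eq_of_forall_ne {n R : Type*} [Fintype n] [DecidableEq n]
    [NonAssocRing R] {M N : Matrix n n R} (i₀ : n) (hcol : 1 ᵥ* M = 1 ᵥ* N)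
    (hrow : ∀ i, i ≠ i₀ → M i = N i) :
    M = N := by
  ext i j
  obtain rfl | hi := eq_or_ne i i₀
  · have hsum := congrFun hcol j
    simp only [vecMul, dotProduct, Pi.one_apply, one_mul] at hsum
    rw [← Finset.add_sum_erase _ _ (Finset.mem_univ i),
      ← Finset.add_sum_erase _ _ (Finset.mem_univ i),
      Finset.sum_congr rfl fun k hk => congrFun (hrow k (Finset.ne_of_mem_erase hk)) j] at hsum
    exact add_right_cancel hsum
  · rw [hrow i hi]

theorem one_vecMul_R12 (x y : ℝ) : 1 ᵥ* R12 x y = 1 := by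
  ext j; fin_cases j <;> simp [R12, vecMul, dotProduct, Fin.sum_univ_three]

theorem one_vecMul_R13 (x y : ℝ) : 1 ᵥ* R13 x y = 1 := by
  ext j; fin_cases j <;> simp [R13, vecMul, dotProduct, Fin.sum_univ_three]

theorem one_vecMul_R23 (x y : ℝ) : 1 ᵥ* R23 x y = 1 := by
  ext j; fin_cases j <;> simp [R23, vecMul, dotProduct, Fin.sum_univ_three]

theorem R12_mul_R13_mul_R23 (x y z u v w : ℝ) :
    R12 x y * R13 z u * R23 v w =
      !![x * z, x * u * (1 - v) + y * v, x * u * (1 - w) + y * w;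
        (1 - x) * z, (1 - x) * u * (1 - v) + (1 - y) * v, (1 - x) * u * (1 - w) + (1 - y) * w;
        1 - z, (1 - u) * (1 - v), (1 - u) * (1 - w)] := by
  ext i j; fin_cases i <;> fin_cases j <;> simp [R12, R13, R23] <;> ring

theorem R23_mul_R13_mul_R12 (x y z u v w : ℝ) :
    R23 v w * R13 z u * R12 x y =
      !![z * x, z * y, u;
        v * (1 - x) + w * (1 - z) * x, v * (1 - y) + w * (1 - z) * y, w * (1 - u);
        (1 - v) * (1 - x) + (1 - w) * (1 - z) * x, (1 - v) * (1 - y) + (1 - w) * (1 - z) * y,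
          (1 - w) * (1 - u)] := by
  ext i j; fin_cases i <;> fin_cases j <;> simp [R12, R13, R23] <;> ring

/-- Local Yang–Baxter equation for the two-parameter R-matrix. -/
theorem stmt_19 (x y z u v w : ℝ)
    (A B C : ℝ)
    (hA : A = u * v * x - u * x - v * y + x * z)
    (hB : B = u * w * x - u * x - w * y + 1)
    (hC : C = (A * B - A * (1 - u) * (1 - w) * x - B * v * (x - y))
      / (A * B - A * (1 - u) * (1 - w) - B * v * z * (x - y)))
    (hx : x ≠ 0) (hA0 : A ≠ 0) (hB0 : B ≠ 0) (hC0 : C ≠ 0)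
    (hden : A * B - A * (1 - u) * (1 - w) - B * v * z * (x - y) ≠ 0)
    (X Y Z U V W : ℝ)
    (hX : X = z * C) (hY : Y = (z - A / x) * C) (hZ : Z = x / C)
    (hU : U = 1 - B) (hV : V = v * z * (x - y) / A)
    (hW : W = 1 - (1 - u) * (1 - w) / B) :
    R12 x y * R13 z u * R23 v w = R23 V W * R13 Z U * R12 X Y := by
  have hCD : C * (A * B - A * (1 - u) * (1 - w) - B * v * z * (x - y)) =
      A * B - A * (1 - u) * (1 - w) * x - B * v * (x - y) := by
    rw [hC, div_mul_cancel₀ _ hden]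
  have entry00 : Z * X = x * z := by rw [hZ, hX]; field_simp
  have entry01 : Z * Y = x * u * (1 - v) + y * v := by rw [hZ, hY, hA]; field_simp; ring
  have entry02 : U = x * u * (1 - w) + y * w := by rw [hU, hB]; ring
  have entry10 : V * (1 - X) + W * (1 - Z) * X = (1 - x) * z := by
    rw [hV, hW, hX, hZ]; field_simp
    linear_combination z * hCD
  have entry11 : V * (1 - Y) + W * (1 - Z) * Y = (1 - x) * u * (1 - v) + (1 - y) * v := by
    rw [hV, hW, hY, hZ]; field_simp
    subst hA
    linear_combination (x * u * (1 - v) + y * v) * hCD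
  have entry12 : W * (1 - U) = (1 - x) * u * (1 - w) + (1 - y) * w := by
    rw [hW, hU]; field_simp; rw [hB]; ring
  refine Matrix.eq_of_one_vecMul_eq_of_forall_ne 2 ?_ fun i hi => ?_
  · simp only [← vecMul_vecMul, one_vecMul_R12, one_vecMul_R13, one_vecMul_R23]
  rw [R12_mul_R13_mul_R23, R23_mul_R13_mul_R12]
  fin_cases i
  · ext j; fin_cases j <;> simp [entry00, entry01, entry02]
  · ext j; fin_cases j <;> simp [entry10, entry11, entry12]
  · exact absurd rfl hi
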